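/- Let A : m × n, b ∈ range(A), Γ : m × q, Ā = [A Γ], P = Ā⁺Ā, Y = [0 I_q], W = Y(I−P) = [B S], f = −YĀ⁺b, and assume S = W Wᵀ is invertible. If (x, y) is the minimal-norm solution of the consistent system [[A Γ];[B S]](x,y) = (b,f), then y = 0 and A x = b. -/

import Mathlib

/-!
Write `M = [Ā; W]` and `S = W Wᵀ`. Since `I - Ā⁺Ā` is a symmetric idempotent killed by `Ā` on the
left and by `Ā⁺` on the right, the vector `z₀ = Ā⁺b + Wᵀ S⁻¹ f` solves `M z₀ = (b, f)`, lies in the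
range of `Mᵀ`, and satisfies `Y z₀ = Y Ā⁺ b + S S⁻¹ f = 0`. The minimal-norm solution `M⁺(b, f)` is
the unique solution in the range of `Mᵀ`, so it equals `z₀`; its `y`-block `Y z₀` vanishes, and then
`Ā z₀ = b` reads `A x = b`.
-/

open Matrix

def IsMP {m n : Type*} [Fintype m] [Fintype n]
    (E : Matrix m n ℝ) (X : Matrix n m ℝ) : Prop :=
  E * X * E = E ∧ X * E * X = X ∧ (E * X)ᵀ = E * X ∧ (X * E)ᵀ = X * E

namespace IsMP

variable {m n : Type*} [Fintype m] [Fintype n] {E : Matrix m n ℝ} {X : Matrix n m ℝ}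

theorem mul_mul_transpose (h : IsMP E X) : X * E * Eᵀ = Eᵀ := by
  rw [← h.2.2.2, ← transpose_mul, ← Matrix.mul_assoc, h.1]

theorem mulVec_eq_of_mem_range_transpose (h : IsMP E X) {z : n → ℝ}
    (hz : z ∈ Set.range Eᵀ.mulVec) : X *ᵥ (E *ᵥ z) = z := by
  obtain ⟨u, rfl⟩ := hz
  rw [mulVec_mulVec, mulVec_mulVec, h.mul_mul_transpose]

theorem mulVec_mem_range_transpose (h : IsMP E X) (c : m → ℝ) :
    X *ᵥ c ∈ Set.range Eᵀ.mulVec :=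
  ⟨Xᵀ *ᵥ (X *ᵥ c), by rw [mulVec_mulVec, mulVec_mulVec, ← transpose_mul, h.2.2.2, h.2.1]⟩

section Complement

variable [DecidableEq n]

theorem isIdempotentElem_one_sub_mul (h : IsMP E X) : IsIdempotentElem (1 - X * E) :=
  IsIdempotentElem.one_sub <| by
    rw [IsIdempotentElem, ← Matrix.mul_assoc, h.2.1]

theorem transpose_one_sub_mul (h : IsMP E X) : (1 - X * E)ᵀ = 1 - X * E := by
  rw [transpose_sub, transpose_one, h.2.2.2]

theorem mul_one_sub_mul (h : IsMP E X) : E * (1 - X * E) = 0 := by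
  rw [Matrix.mul_sub, Matrix.mul_one, ← Matrix.mul_assoc, h.1, sub_self]

theorem one_sub_mul_mul (h : IsMP E X) : (1 - X * E) * X = 0 := by
  rw [Matrix.sub_mul, Matrix.one_mul, h.2.1, sub_self]

end Complement

section Bordered

variable {k : Type*} [Fintype k] [DecidableEq k] [DecidableEq n]

theorem exists_bordered_solution (h : IsMP E X) {b : m → ℝ} (hb : b ∈ Set.range E.mulVec)
    (Y : Matrix k n ℝ) {W : Matrix k n ℝ} (hW : W = Y * (1 - X * E)) (hS : IsUnit (W * Wᵀ)) :
    ∃ z ∈ Set.range (fromRows E W)ᵀ.mulVec,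
      fromRows E W *ᵥ z = Sum.elim b (-((Y * X) *ᵥ b)) ∧ Y *ᵥ z = 0 := by
  set f := -((Y * X) *ᵥ b)
  have hWt : Wᵀ = (1 - X * E) * Yᵀ := by rw [hW, transpose_mul, h.transpose_one_sub_mul]
  have hEWt : E * Wᵀ = 0 := by rw [hWt, ← Matrix.mul_assoc, h.mul_one_sub_mul, Matrix.zero_mul]
  have hWX : W * X = 0 := by rw [hW, Matrix.mul_assoc, h.one_sub_mul_mul, Matrix.mul_zero]
  -- `1 - X * E` is an idempotent, so `Y Wᵀ = Y (1 - X E)² Yᵀ = W Wᵀ`.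
  have hYWt : Y * Wᵀ = W * Wᵀ := by
    rw [hWt, hW, Matrix.mul_assoc Y, ← Matrix.mul_assoc (1 - X * E),
      h.isIdempotentElem_one_sub_mul.eq]
  have hEXb : E *ᵥ (X *ᵥ b) = b := by
    obtain ⟨x, rfl⟩ := hb
    rw [mulVec_mulVec, mulVec_mulVec, h.1]
  have hSS : (W * Wᵀ) *ᵥ ((W * Wᵀ)⁻¹ *ᵥ f) = f := by
    rw [mulVec_mulVec, mul_nonsing_inv _ ((isUnit_iff_isUnit_det _).mp hS), one_mulVec]
  obtain ⟨u, hu⟩ := h.mulVec_mem_range_transpose b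
  refine ⟨X *ᵥ b + Wᵀ *ᵥ ((W * Wᵀ)⁻¹ *ᵥ f), ⟨Sum.elim u ((W * Wᵀ)⁻¹ *ᵥ f), ?_⟩, ?_, ?_⟩
  · rw [transpose_fromRows, fromCols_mulVec_sumElim, hu]
  · rw [fromRows_mulVec, mulVec_add, mulVec_add, hEXb, mulVec_mulVec, hEWt, zero_mulVec,
      add_zero, mulVec_mulVec _ W X, hWX, zero_mulVec, zero_add, mulVec_mulVec _ W Wᵀ, hSS]
  · rw [mulVec_add, mulVec_mulVec _ Y Wᵀ, hYWt, hSS, mulVec_mulVec, add_neg_cancel]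

theorem mulVec_eq_and_mulVec_eq_zero_of_bordered (h : IsMP E X) {b : m → ℝ}
    (hb : b ∈ Set.range E.mulVec) (Y : Matrix k n ℝ) {W : Matrix k n ℝ}
    (hW : W = Y * (1 - X * E)) (hS : IsUnit (W * Wᵀ)) {f : k → ℝ} (hf : f = -((Y * X) *ᵥ b))
    {Mp : Matrix n (m ⊕ k) ℝ} (hMp : IsMP (fromRows E W) Mp) {z : n → ℝ} (hz : z = Mp *ᵥ Sum.elim b f) :
    E *ᵥ z = b ∧ Y *ᵥ z = 0 := by
  obtain ⟨z₀, hz₀_range, hz₀, hYz₀⟩ := h.exists_bordered_solution hb Y hW hS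
  rw [hz, hf, ← hz₀, hMp.mulVec_eq_of_mem_range_transpose hz₀_range]
  refine ⟨?_, hYz₀⟩
  simpa using funext fun i => congrFun hz₀ (Sum.inl i)

end Bordered

end IsMP

theorem stmt17 {m n q : ℕ} (A : Matrix (Fin m) (Fin n) ℝ) (G : Matrix (Fin m) (Fin q) ℝ)
    (b : Fin m → ℝ) (hb : ∃ x, A.mulVec x = b)
    (Abp : Matrix (Fin n ⊕ Fin q) (Fin m) ℝ) (hAbp : IsMP (fromCols A G) Abp)
    (W : Matrix (Fin q) (Fin n ⊕ Fin q) ℝ)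
    (hW : W = fromCols (0 : Matrix (Fin q) (Fin n) ℝ) 1 * (1 - Abp * fromCols A G))
    (hS : IsUnit (W * Wᵀ))
    (f : Fin q → ℝ)
    (hf : f = -((fromCols (0 : Matrix (Fin q) (Fin n) ℝ) 1 * Abp).mulVec b))
    (Mp : Matrix (Fin n ⊕ Fin q) (Fin m ⊕ Fin q) ℝ)
    (hMp : IsMP (fromRows (fromCols A G) W) Mp)
    (z : (Fin n ⊕ Fin q) → ℝ) (hz : z = Mp.mulVec (Sum.elim b f)) :
    (∀ j, z (Sum.inr j) = 0) ∧ A.mulVec (fun i => z (Sum.inl i)) = b := by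
  obtain ⟨x, rfl⟩ := hb
  have hb_range : A *ᵥ x ∈ Set.range (fromCols A G).mulVec :=
    ⟨Sum.elim x 0, by rw [fromCols_mulVec_sumElim, mulVec_zero, add_zero]⟩
  obtain ⟨hAz, hYz⟩ := hAbp.mulVec_eq_and_mulVec_eq_zero_of_bordered hb_range _ hW hS hf hMp hz
  have hy : z ∘ Sum.inr = 0 := by simpa using hYz
  refine ⟨congrFun hy, ?_⟩
  rwa [fromCols_mulVec, hy, mulVec_zero, add_zero] at hAz
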